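/- arXiv:1907.07806 — 2 statements merged into one kernel-verified Lean document; each statement's English description precedes it below -/
import Mathlib

section
/- (Lemma 2.1) The adjoint S* : L²(Γ) → ℝ^{n_D} of the harmonic extension operator S possesses the representation S* = −K∘P; that is, for every y ∈ L²(Γ) and every z ∈ ℝ^{n_D} one has (y, S z)_{L²(Γ)} = −(K(Py))ᵀ z, where P : L²(Γ) → H¹_D(Γ) is defined by Py = p with a(v,p) = (y,v)_{L²(Γ)} for all v ∈ H¹_D(Γ), and K is the Kirchhoff operator evaluated at the Dirichlet vertices. -/
open MeasureTheory Set

/-- A metric graph: a finite graph where each edge `e` is identified with the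
interval `[0, len e]`, with `src e` sitting at coordinate `0` and `dst e` at `len e`. -/
structure MGraph where
  V : Type
  E : Type
  fintV : Fintype V
  fintE : Fintype E
  decV : DecidableEq V
  src : E → V
  dst : E → V
  len : E → ℝ
  len_pos : ∀ e, 0 < len e

attribute [instance] MGraph.fintV MGraph.fintE MGraph.decV

/-- A function on the metric graph, given edgewise. -/
abbrev GFun (G : MGraph) := G.E → ℝ → ℝ

namespace MGraph

variable (G : MGraph)

/-- The derivative along edge `e` (within the edge interval). -/
noncomputable def edgeDeriv (y : GFun G) (e : G.E) : ℝ → ℝ :=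
  derivWithin (y e) (Icc (0:ℝ) (G.len e))

/-- The second derivative along edge `e`. -/
noncomputable def edgeDeriv2 (y : GFun G) (e : G.E) : ℝ → ℝ :=
  derivWithin (G.edgeDeriv y e) (Icc (0:ℝ) (G.len e))

/-- The `L²(Γ)` inner product `(f,g) = Σ_e ∫_e f g`. -/
noncomputable def ip2 (f g : GFun G) : ℝ :=
  ∑ e : G.E, ∫ x in (0:ℝ)..(G.len e), f e x * g e x

/-- The bilinear form `a(y,w) = Σ_e ∫_e (y' w' + c₀ y w)`. -/
noncomputable def bform (c0 y w : GFun G) : ℝ :=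
  ∑ e : G.E, ∫ x in (0:ℝ)..(G.len e),
    (G.edgeDeriv y e x * G.edgeDeriv w e x + c0 e x * y e x * w e x)

/-- Membership in `L²(Γ)` (edgewise square integrability). -/
def MemL2 (f : GFun G) : Prop :=
  ∀ e, IntervalIntegrable (fun x => (f e x)^2) volume 0 (G.len e)

/-- The squared `L²(Γ)`-norm. -/
noncomputable def l2normSq (f : GFun G) : ℝ :=
  ∑ e : G.E, ∫ x in (0:ℝ)..(G.len e), (f e x)^2

/-- The squared `H¹(Γ)`-norm. -/
noncomputable def h1normSq (y : GFun G) : ℝ :=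
  G.l2normSq y + ∑ e : G.E, ∫ x in (0:ℝ)..(G.len e), (G.edgeDeriv y e x)^2

/-- The squared `H²(Γ)`-seminorm `Σ_e ‖y''‖²`. -/
noncomputable def h2semiSq (y : GFun G) : ℝ :=
  ∑ e : G.E, ∫ x in (0:ℝ)..(G.len e), (G.edgeDeriv2 y e x)^2

/-- Membership in `H¹(Γ)` with vertex values `yv` (in particular continuity
at the vertices of the graph). -/
def MemH1 (y : GFun G) (yv : G.V → ℝ) : Prop :=
  (∀ e, ContinuousOn (y e) (Icc (0:ℝ) (G.len e))) ∧
  (∀ e, ∃ s : Finset ℝ, ∀ x ∈ Icc (0:ℝ) (G.len e), x ∉ s →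
      DifferentiableWithinAt ℝ (y e) (Icc (0:ℝ) (G.len e)) x) ∧
  (∀ e, y e 0 = yv (G.src e)) ∧
  (∀ e, y e (G.len e) = yv (G.dst e)) ∧
  G.MemL2 y ∧
  (∀ e, IntervalIntegrable (fun x => (G.edgeDeriv y e x)^2) volume 0 (G.len e))

/-- Membership in `H¹_D(Γ)`: `H¹(Γ)` with vanishing values at the Dirichlet vertices. -/
def MemH1D (VD : Finset G.V) (y : GFun G) (yv : G.V → ℝ) : Prop :=
  G.MemH1 y yv ∧ ∀ v ∈ VD, yv v = 0

/-- Membership in `H²(Γ)` (edgewise; the function is `C¹` on each closed edge and the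
first derivative is again weakly differentiable with square-integrable derivative). -/
def MemH2 (y : GFun G) : Prop :=
  (∀ e, ∀ x ∈ Icc (0:ℝ) (G.len e), DifferentiableWithinAt ℝ (y e) (Icc (0:ℝ) (G.len e)) x) ∧
  (∀ e, ContinuousOn (G.edgeDeriv y e) (Icc (0:ℝ) (G.len e))) ∧
  (∀ e, ∀ᵐ x ∂(volume.restrict (Ioo (0:ℝ) (G.len e))),
      DifferentiableWithinAt ℝ (G.edgeDeriv y e) (Icc (0:ℝ) (G.len e)) x) ∧
  (∀ e, IntervalIntegrable (fun x => (G.edgeDeriv2 y e x)^2) volume 0 (G.len e))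

/-- The Kirchhoff operator `(Ky)(v) = Σ_{e ∈ E_v} y|_e'(v)`, where the derivative along each
incident edge is taken in the direction pointing towards `v`. -/
noncomputable def Kop (y : GFun G) (v : G.V) : ℝ :=
  ∑ e : G.E, ((if G.dst e = v then G.edgeDeriv y e (G.len e) else 0)
    - (if G.src e = v then G.edgeDeriv y e 0 else 0))

/-- Adjacency of vertices. -/
def Adj (v w : G.V) : Prop :=
  ∃ e, (G.src e = v ∧ G.dst e = w) ∨ (G.src e = w ∧ G.dst e = v)

/-- Connectedness of the graph. -/
def Connected : Prop := ∀ v w : G.V, Relation.ReflTransGen G.Adj v w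

/-- The Euclidean norm of the restriction of `u` to the Dirichlet vertex set. -/
noncomputable def dnorm (VD : Finset G.V) (u : G.V → ℝ) : ℝ :=
  Real.sqrt (∑ v ∈ VD, (u v)^2)

/-- `y` is affine on each cell of the equidistant grid with `n e` subintervals on edge `e`. -/
def PiecewiseAffine (n : G.E → ℕ) (y : GFun G) : Prop :=
  ∀ e, ∀ k : ℕ, k < n e →
    ∃ p q : ℝ, ∀ x ∈ Icc ((k : ℝ) * (G.len e / (n e : ℝ))) (((k : ℝ) + 1) * (G.len e / (n e : ℝ))),
      y e x = p * x + q

/-- Membership in the finite element space `V_h` (continuous, edgewise piecewise affine). -/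
def MemVh (n : G.E → ℕ) (y : GFun G) (yv : G.V → ℝ) : Prop :=
  G.MemH1 y yv ∧ G.PiecewiseAffine n y

/-- Membership in `V_{h,D} = V_h ∩ H¹_D(Γ)`. -/
def MemVhD (VD : Finset G.V) (n : G.E → ℕ) (y : GFun G) (yv : G.V → ℝ) : Prop :=
  G.MemVh n y yv ∧ ∀ v ∈ VD, yv v = 0

/-- The nodal (hat) basis function of `V_h` attached to the vertex `v`. -/
noncomputable def hatFn (n : G.E → ℕ) (v : G.V) : GFun G :=
  fun e x =>
    (if G.src e = v then max 0 (1 - x / (G.len e / (n e : ℝ))) else 0)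
    + (if G.dst e = v then max 0 (1 - (G.len e - x) / (G.len e / (n e : ℝ))) else 0)

/-- The discrete (variational) Kirchhoff operator applied to `p_h = P_h ydata`:
`(K_h p_h)(v) = a(φ_v, p_h) - (ydata, φ_v)`. -/
noncomputable def Khop (c0 : GFun G) (n : G.E → ℕ) (ydata ph : GFun G) (v : G.V) : ℝ :=
  G.bform c0 (G.hatFn n v) ph - G.ip2 ydata (G.hatFn n v)

/-- The objective functional `½‖y-ȳ‖² + (β/2)|u|₂²` of the optimal control problem. -/
noncomputable def objective (VD : Finset G.V) (ybar : GFun G) (β : ℝ)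
    (u : G.V → ℝ) (y : GFun G) : ℝ :=
  (1/2) * G.l2normSq (fun e x => y e x - ybar e x) + (β/2) * ∑ v ∈ VD, (u v)^2

/-- `(u, y)` is feasible for the continuous optimal control problem:
`y` is a weak solution of the state equation with Dirichlet data `u`. -/
def Feasible (VD : Finset G.V) (c0 f : GFun G) (u : G.V → ℝ)
    (y : GFun G) (yv : G.V → ℝ) : Prop :=
  G.MemH1 y yv ∧ (∀ v ∈ VD, yv v = u v) ∧
  ∀ w wv, G.MemH1D VD w wv → G.bform c0 y w = G.ip2 f w

/-- `(u, y)` is feasible for the discretized optimal control problem: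
`y ∈ V_h` is a Galerkin solution of the state equation with Dirichlet data `u`. -/
def FeasibleH (VD : Finset G.V) (n : G.E → ℕ) (c0 f : GFun G) (u : G.V → ℝ)
    (y : GFun G) (yv : G.V → ℝ) : Prop :=
  G.MemVh n y yv ∧ (∀ v ∈ VD, yv v = u v) ∧
  ∀ w wv, G.MemVhD VD n w wv → G.bform c0 y w = G.ip2 f w

/-- The edgewise-affine extension `S̃_h u` of Dirichlet data `u` (value `u v` at Dirichlet
vertices, `0` at Kirchhoff vertices, affine along each whole edge). -/
noncomputable def tildeExt (VD : Finset G.V) (u : G.V → ℝ) : GFun G :=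
  fun e x =>
    (if G.src e ∈ VD then u (G.src e) else 0)
    + ((if G.dst e ∈ VD then u (G.dst e) else 0)
        - (if G.src e ∈ VD then u (G.src e) else 0)) * x / G.len e

end MGraph

/-!
Test the adjoint equation `a(w, p) = (y, w)` with `w = χ_ε ψ`, where `ψ` is any `H¹` function on
one edge `[0, L]` and `χ_ε` is the trapezoidal cutoff rising from `0` to `1` on `[0, ε]` and falling
back on `[L - ε, L]`. As `ε → 0`, the term `∫ χ_ε' ψ p'` becomes the difference of the averages of
`ψ p'` over the two end intervals, which tend to the endpoint values because `p'` is continuous;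
so on every edge `∫ y ψ = ∫ (ψ' p' + c₀ ψ p) + ψ(0) p'(0) - ψ(L) p'(L)`, without ever using `p''`.
Summing over the edges gives `(y, φ) = a(φ, p) - Σ_v φ(v) (Kp)(v)` for all `φ ∈ H¹(Γ)`. For the
hat function `φ` of a Kirchhoff vertex, `φ ∈ H¹_D(Γ)` and `(y, φ) = a(φ, p)`, so `Kp` vanishes off
`V_D`; for `φ = Sz`, `a(Sz, p) = 0` by harmonicity.
-/

open Filter Topology intervalIntegral
open scoped Interval

structure MemH1Icc (L : ℝ) (ψ : ℝ → ℝ) : Prop where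
  continuousOn : ContinuousOn ψ (Icc 0 L)
  exists_finset_differentiableWithinAt :
    ∃ s : Finset ℝ, ∀ x ∈ Icc 0 L, x ∉ s → DifferentiableWithinAt ℝ ψ (Icc 0 L) x
  intervalIntegrable_derivWithin_sq :
    IntervalIntegrable (fun x => derivWithin ψ (Icc 0 L) x ^ 2) volume 0 L

instance isFiniteMeasure_restrict_uIoc (a b : ℝ) : IsFiniteMeasure (volume.restrict (Ι a b)) := by
  rw [uIoc]; infer_instance

section Interval

variable {L : ℝ}

lemma ae_mem_Ioo_notMem (hL : 0 ≤ L) (s : Finset ℝ) :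
    ∀ᵐ x ∂volume.restrict (Ι 0 L), x ∈ Ioo 0 L ∧ x ∉ s := by
  have hnull : ∀ᵐ x ∂volume, x ∉ insert L (s : Set ℝ) :=
    (s.finite_toSet.insert L).countable.ae_notMem volume
  rw [uIoc_of_le hL]
  filter_upwards [ae_restrict_mem measurableSet_Ioc, ae_restrict_of_ae hnull] with x hx hxs
  exact ⟨⟨hx.1, hx.2.lt_of_ne fun h => hxs (.inl h)⟩, fun h => hxs (.inr h)⟩

lemma aestronglyMeasurable_derivWithin_Icc (hL : 0 ≤ L) (ψ : ℝ → ℝ) :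
    AEStronglyMeasurable (derivWithin ψ (Icc 0 L)) (volume.restrict (Ι 0 L)) := by
  refine (measurable_deriv ψ).aestronglyMeasurable.congr ?_
  filter_upwards [ae_mem_Ioo_notMem hL ∅] with x hx
  exact (derivWithin_of_mem_nhds (Icc_mem_nhds hx.1.1 hx.1.2)).symm

namespace MemH1Icc

variable {φ ψ : ℝ → ℝ}

lemma intervalIntegrable_derivWithin (hL : 0 ≤ L) (hψ : MemH1Icc L ψ) :
    IntervalIntegrable (derivWithin ψ (Icc 0 L)) volume 0 L := by
  have hsq := intervalIntegrable_iff.1 hψ.intervalIntegrable_derivWithin_sq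
  exact intervalIntegrable_iff.2 <|
    ((memLp_two_iff_integrable_sq (aestronglyMeasurable_derivWithin_Icc hL ψ)).2 hsq).integrable
      one_le_two

lemma derivWithin_mul_ae (hL : 0 ≤ L) (hφ : MemH1Icc L φ) (hψ : MemH1Icc L ψ) :
    ∀ᵐ x ∂volume.restrict (Ι 0 L), derivWithin (fun t => φ t * ψ t) (Icc 0 L) x
      = derivWithin φ (Icc 0 L) x * ψ x + φ x * derivWithin ψ (Icc 0 L) x := by
  obtain ⟨s, hs⟩ := hφ.exists_finset_differentiableWithinAt
  obtain ⟨t, ht⟩ := hψ.exists_finset_differentiableWithinAt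
  filter_upwards [ae_mem_Ioo_notMem hL (s ∪ t)] with x ⟨hx, hxst⟩
  rw [Finset.mem_union, not_or] at hxst
  exact derivWithin_fun_mul (hs x (Ioo_subset_Icc_self hx) hxst.1)
    (ht x (Ioo_subset_Icc_self hx) hxst.2)

lemma mul (hL : 0 ≤ L) (hφ : MemH1Icc L φ) (hψ : MemH1Icc L ψ) :
    MemH1Icc L (fun x => φ x * ψ x) := by
  refine ⟨hφ.continuousOn.mul hψ.continuousOn, ?_, ?_⟩
  · obtain ⟨s, hs⟩ := hφ.exists_finset_differentiableWithinAt
    obtain ⟨t, ht⟩ := hψ.exists_finset_differentiableWithinAt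
    refine ⟨s ∪ t, fun x hx hxst => ?_⟩
    rw [Finset.mem_union, not_or] at hxst
    exact (hs x hx hxst.1).mul (ht x hx hxst.2)
  obtain ⟨Mφ, hMφ⟩ := isCompact_Icc.exists_bound_of_continuousOn hφ.continuousOn
  obtain ⟨Mψ, hMψ⟩ := isCompact_Icc.exists_bound_of_continuousOn hψ.continuousOn
  have hbound := ((intervalIntegrable_iff.1 hφ.intervalIntegrable_derivWithin_sq).const_mul
    (2 * Mψ ^ 2)).add ((intervalIntegrable_iff.1 hψ.intervalIntegrable_derivWithin_sq).const_mul
    (2 * Mφ ^ 2))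
  refine intervalIntegrable_iff.2
    (hbound.mono' ((aestronglyMeasurable_derivWithin_Icc hL _).pow 2) ?_)
  filter_upwards [derivWithin_mul_ae hL hφ hψ, ae_mem_Ioo_notMem hL ∅] with x hx hxI
  have hφx : φ x ^ 2 ≤ Mφ ^ 2 := by
    simpa using pow_le_pow_left₀ (norm_nonneg _) (hMφ x (Ioo_subset_Icc_self hxI.1)) 2
  have hψx : ψ x ^ 2 ≤ Mψ ^ 2 := by
    simpa using pow_le_pow_left₀ (norm_nonneg _) (hMψ x (Ioo_subset_Icc_self hxI.1)) 2
  rw [hx, Real.norm_eq_abs, abs_of_nonneg (sq_nonneg _), Pi.add_apply]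
  nlinarith [sq_nonneg (derivWithin φ (Icc 0 L) x * ψ x - φ x * derivWithin ψ (Icc 0 L) x),
    mul_le_mul_of_nonneg_left hψx (sq_nonneg (derivWithin φ (Icc 0 L) x)),
    mul_le_mul_of_nonneg_left hφx (sq_nonneg (derivWithin ψ (Icc 0 L) x))]

end MemH1Icc

lemma memH1Icc_of_contDiff (hL : 0 < L) {ψ : ℝ → ℝ} (hψ : ContDiff ℝ 1 ψ) : MemH1Icc L ψ := by
  refine ⟨hψ.continuous.continuousOn, ⟨∅, fun x _ _ =>
    (hψ.differentiable one_ne_zero x).differentiableWithinAt⟩, ?_⟩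
  refine (((hψ.continuous_deriv le_rfl).pow 2).intervalIntegrable 0 L).congr fun x hx => ?_
  rw [uIoc_of_le hL.le] at hx
  rw [(hψ.differentiable one_ne_zero x).derivWithin
    (uniqueDiffOn_Icc hL x (Ioc_subset_Icc_self hx)), Pi.pow_apply]

end Interval

noncomputable def cutoff (L ε x : ℝ) : ℝ := min 1 (min (x / ε) ((L - x) / ε))

section Cutoff

variable {L ε x : ℝ}

lemma continuous_cutoff (L ε : ℝ) : Continuous (cutoff L ε) := by
  unfold cutoff; fun_prop

lemma cutoff_zero (hL : 0 ≤ L) (hε : 0 < ε) : cutoff L ε 0 = 0 := by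
  simp [cutoff, div_nonneg hL hε.le]

lemma cutoff_self (hL : 0 ≤ L) (hε : 0 < ε) : cutoff L ε L = 0 := by
  simp [cutoff, div_nonneg hL hε.le]

lemma abs_cutoff_le_one (hε : 0 < ε) (hx : x ∈ Icc 0 L) : |cutoff L ε x| ≤ 1 := by
  have : 0 ≤ cutoff L ε x :=
    le_min zero_le_one (le_min (div_nonneg hx.1 hε.le) (div_nonneg (sub_nonneg.2 hx.2) hε.le))
  exact abs_le.2 ⟨by linarith, min_le_left _ _⟩

lemma cutoff_pos (hε : 0 < ε) (hx : x ∈ Ioo 0 L) : 0 < cutoff L ε x :=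
  lt_min one_pos (lt_min (div_pos hx.1 hε) (div_pos (sub_pos.2 hx.2) hε))

lemma cutoff_eq_left (hε : 0 < ε) (hεL : ε ≤ L / 2) (hx : x ≤ ε) : cutoff L ε x = x / ε := by
  rw [cutoff, min_eq_left (div_le_div_of_nonneg_right (by linarith) hε.le),
    min_eq_right ((div_le_one hε).2 hx)]

lemma cutoff_eq_one (hε : 0 < ε) (h₁ : ε ≤ x) (h₂ : x ≤ L - ε) : cutoff L ε x = 1 :=
  min_eq_left (le_min ((one_le_div hε).2 h₁) ((one_le_div hε).2 (by linarith)))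

lemma cutoff_eq_right (hε : 0 < ε) (hεL : ε ≤ L / 2) (hx : L - ε ≤ x) :
    cutoff L ε x = (L - x) / ε := by
  rw [cutoff, min_eq_right (div_le_div_of_nonneg_right (by linarith) hε.le),
    min_eq_right ((div_le_one hε).2 (by linarith))]

lemma eventually_cutoff_eq_one (hx : x ∈ Ioo 0 L) : ∀ᶠ ε in 𝓝[>] 0, cutoff L ε x = 1 := by
  filter_upwards [Ioo_mem_nhdsGT (lt_min hx.1 (sub_pos.2 hx.2))] with ε hε
  exact cutoff_eq_one hε.1 (hε.2.le.trans (min_le_left _ _))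
    (by linarith [hε.2.le.trans (min_le_right x (L - x))])

lemma hasDerivAt_cutoff (hε : 0 < ε) (hεL : ε ≤ L / 2) (h₁ : x ≠ ε) (h₂ : x ≠ L - ε) :
    ∃ d, |d| ≤ ε⁻¹ ∧ HasDerivAt (cutoff L ε) d x := by
  rcases h₁.lt_or_gt with hx | hx
  · refine ⟨ε⁻¹, (abs_of_pos (inv_pos.2 hε)).le, ?_⟩
    have := ((hasDerivAt_id' x).div_const ε).congr_of_eventuallyEq
      (eventually_of_mem (Iio_mem_nhds hx) fun z hz => cutoff_eq_left hε hεL (le_of_lt hz))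
    rwa [one_div] at this
  rcases h₂.lt_or_gt with hx' | hx'
  · exact ⟨0, by simp [hε.le], (hasDerivAt_const x 1).congr_of_eventuallyEq
      (eventually_of_mem (Ioo_mem_nhds hx hx') fun z hz => cutoff_eq_one hε hz.1.le hz.2.le)⟩
  · refine ⟨-ε⁻¹, by rw [abs_neg, abs_of_pos (inv_pos.2 hε)], ?_⟩
    have := (((hasDerivAt_id' x).const_sub L).div_const ε).congr_of_eventuallyEq
      (eventually_of_mem (Ioi_mem_nhds hx') fun z hz => cutoff_eq_right hε hεL (le_of_lt hz))
    rwa [neg_div, one_div] at this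

lemma memH1Icc_cutoff (hL : 0 < L) (hε : 0 < ε) (hεL : ε ≤ L / 2) : MemH1Icc L (cutoff L ε) := by
  refine ⟨(continuous_cutoff L ε).continuousOn, ⟨{ε, L - ε}, fun x _ hx => ?_⟩, ?_⟩
  · simp only [Finset.mem_insert, Finset.mem_singleton, not_or] at hx
    obtain ⟨d, -, hd⟩ := hasDerivAt_cutoff hε hεL hx.1 hx.2
    exact hd.differentiableAt.differentiableWithinAt
  refine intervalIntegrable_iff.2 ((integrable_const (ε⁻¹ ^ 2)).mono'
    ((aestronglyMeasurable_derivWithin_Icc hL.le _).pow 2) ?_)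
  filter_upwards [ae_mem_Ioo_notMem hL.le {ε, L - ε}] with x ⟨hx, hxs⟩
  simp only [Finset.mem_insert, Finset.mem_singleton, not_or] at hxs
  obtain ⟨d, hd, hder⟩ := hasDerivAt_cutoff hε hεL hxs.1 hxs.2
  rw [hder.hasDerivWithinAt.derivWithin (uniqueDiffOn_Icc hL x (Ioo_subset_Icc_self hx)),
    Real.norm_eq_abs, abs_pow]
  exact pow_le_pow_left₀ (abs_nonneg d) hd 2

end Cutoff

section CutoffLimits

variable {L ε : ℝ}

lemma integral_derivWithin_cutoff_mul (hL : 0 < L) (hε : 0 < ε) (hεL : ε ≤ L / 2) {h : ℝ → ℝ}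
    (hh : ContinuousOn h (Icc 0 L)) :
    ∫ x in 0..L, derivWithin (cutoff L ε) (Icc 0 L) x * h x
      = ε⁻¹ * (∫ x in 0..ε, h x) - ε⁻¹ * ∫ x in L - ε..L, h x := by
  set χ' := derivWithin (cutoff L ε) (Icc 0 L)
  have hint : ∀ a b, a ∈ Icc 0 L → b ∈ Icc 0 L →
      IntervalIntegrable (fun x => χ' x * h x) volume a b := fun a b ha hb =>
      (((memH1Icc_cutoff hL hε hεL).intervalIntegrable_derivWithin hL.le).mul_continuousOn
        (hh.mono (uIcc_of_le hL.le).subset)).mono_set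
        (uIcc_subset_uIcc (by rwa [uIcc_of_le hL.le]) (by rwa [uIcc_of_le hL.le]))
  have hχ' : ∀ {x d}, x ∈ Ioo 0 L → HasDerivAt (cutoff L ε) d x → χ' x = d := fun hx hd =>
    hd.hasDerivWithinAt.derivWithin (uniqueDiffOn_Icc hL _ (Ioo_subset_Icc_self hx))
  have hleft : ∫ x in 0..ε, χ' x * h x = ε⁻¹ * ∫ x in 0..ε, h x := by
    rw [← intervalIntegral.integral_const_mul]
    refine integral_congr_Ioo_of_le hε.le fun x hx => ?_
    have := ((hasDerivAt_id' x).div_const ε).congr_of_eventuallyEq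
      (eventually_of_mem (Iio_mem_nhds hx.2) fun z hz => cutoff_eq_left hε hεL (le_of_lt hz))
    rw [hχ' ⟨hx.1, by linarith [hx.2]⟩ this, one_div]
  have hmid : ∫ x in ε..L - ε, χ' x * h x = 0 := by
    rw [← intervalIntegral.integral_zero]
    refine integral_congr_Ioo_of_le (by linarith) fun x hx => ?_
    have := (hasDerivAt_const x (1 : ℝ)).congr_of_eventuallyEq
      (eventually_of_mem (Ioo_mem_nhds hx.1 hx.2) fun z hz => cutoff_eq_one hε hz.1.le hz.2.le)
    rw [hχ' ⟨by linarith [hx.1], by linarith [hx.2]⟩ this, zero_mul]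
  have hright : ∫ x in L - ε..L, χ' x * h x = -(ε⁻¹ * ∫ x in L - ε..L, h x) := by
    rw [← intervalIntegral.integral_const_mul, ← intervalIntegral.integral_neg]
    refine integral_congr_Ioo_of_le (by linarith) fun x hx => ?_
    have := (((hasDerivAt_id' x).const_sub L).div_const ε).congr_of_eventuallyEq
      (eventually_of_mem (Ioi_mem_nhds hx.1) fun z hz => cutoff_eq_right hε hεL (le_of_lt hz))
    rw [hχ' ⟨by linarith [hx.1], hx.2⟩ this, neg_div, one_div, neg_mul]
  have hε' : ε ∈ Icc 0 L := ⟨hε.le, by linarith⟩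
  have hLε : L - ε ∈ Icc 0 L := ⟨by linarith, by linarith⟩
  have h0 : (0 : ℝ) ∈ Icc 0 L := ⟨le_rfl, hL.le⟩
  have hL' : L ∈ Icc 0 L := ⟨hL.le, le_rfl⟩
  rw [← integral_add_adjacent_intervals (hint _ _ h0 hε') (hint _ _ hε' hL'),
    ← integral_add_adjacent_intervals (hint _ _ hε' hLε) (hint _ _ hLε hL'), hleft, hmid, hright]
  ring

lemma tendsto_inv_mul_integral_zero (hL : 0 < L) {h : ℝ → ℝ} (hh : ContinuousOn h (Icc 0 L)) :
    Tendsto (fun ε => ε⁻¹ * ∫ x in 0..ε, h x) (𝓝[>] 0) (𝓝 (h 0)) := by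
  have h0 : Fact ((0 : ℝ) ∈ Icc 0 L) := ⟨⟨le_rfl, hL.le⟩⟩
  have hF : HasDerivWithinAt (fun u => ∫ x in 0..u, h x) (h 0) (Ioi 0) 0 :=
    (integral_hasDerivWithinAt_right IntervalIntegrable.refl
      (hh.stronglyMeasurableAtFilter_nhdsWithin measurableSet_Icc 0)
      (hh 0 h0.out)).mono_of_mem_nhdsWithin (Icc_mem_nhdsGT hL)
  refine ((hasDerivWithinAt_iff_tendsto_slope' (lt_irrefl 0)).1 hF).congr fun ε => ?_
  simp [slope_def_field, div_eq_inv_mul]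

lemma tendsto_inv_mul_integral_self (hL : 0 < L) {h : ℝ → ℝ} (hh : ContinuousOn h (Icc 0 L)) :
    Tendsto (fun ε => ε⁻¹ * ∫ x in L - ε..L, h x) (𝓝[>] 0) (𝓝 (h L)) := by
  have hrefl : ContinuousOn (fun x => h (L - x)) (Icc 0 L) :=
    hh.comp (by fun_prop) fun x hx => ⟨by linarith [hx.2], by linarith [hx.1]⟩
  simpa [integral_comp_sub_left] using tendsto_inv_mul_integral_zero hL hrefl

/-- No measurability of `F` is assumed: if `F` is not a.e. measurable, neither is any
`cutoff L ε * F` with `ε > 0` (the cutoff is positive inside), and all integrals vanish. -/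
lemma tendsto_integral_cutoff_mul (hL : 0 < L) {F b : ℝ → ℝ}
    (hb : IntervalIntegrable b volume 0 L) (hFb : ∀ᵐ x ∂volume.restrict (Ι 0 L), |F x| ≤ b x) :
    Tendsto (fun ε => ∫ x in 0..L, cutoff L ε x * F x) (𝓝[>] 0) (𝓝 (∫ x in 0..L, F x)) := by
  by_cases hF : AEStronglyMeasurable F (volume.restrict (Ι 0 L))
  · refine tendsto_integral_filter_of_dominated_convergence b
      (.of_forall fun ε => (continuous_cutoff L ε).aestronglyMeasurable.mul hF) ?_ hb ?_
    · filter_upwards [self_mem_nhdsWithin] with ε hε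
      rw [← ae_restrict_iff' measurableSet_uIoc]
      filter_upwards [hFb, ae_mem_Ioo_notMem hL.le ∅] with x hx hxI
      rw [Real.norm_eq_abs, abs_mul]
      exact (mul_le_of_le_one_left (abs_nonneg _)
        (abs_cutoff_le_one hε (Ioo_subset_Icc_self hxI.1))).trans hx
    · rw [← ae_restrict_iff' measurableSet_uIoc]
      filter_upwards [ae_mem_Ioo_notMem hL.le ∅] with x hx
      exact tendsto_const_nhds.congr'
        ((eventually_cutoff_eq_one hx.1).mono fun ε hε => by simp [hε])
  · have hχF : ∀ ε > 0, ¬IntervalIntegrable (fun x => cutoff L ε x * F x) volume 0 L := by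
      refine fun ε hε hint => hF ((intervalIntegrable_iff.1 hint).aestronglyMeasurable.mul
        ((continuous_cutoff L ε).measurable.inv.aestronglyMeasurable) |>.congr ?_)
      filter_upwards [ae_mem_Ioo_notMem hL.le ∅] with x hx
      simp only [Pi.mul_apply, Pi.inv_apply]
      field_simp [(cutoff_pos hε hx.1).ne']
    rw [integral_undef fun h => hF (intervalIntegrable_iff.1 h).aestronglyMeasurable]
    refine tendsto_const_nhds.congr' ?_
    filter_upwards [self_mem_nhdsWithin] with ε hε
    exact (integral_undef (hχF ε hε)).symm

end CutoffLimits

section WeakFormulation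

variable {L ε : ℝ} {f g q ψ : ℝ → ℝ}

lemma MemH1Icc.intervalIntegrable_derivWithin_mul_add (hψ : MemH1Icc L ψ) (hL : 0 < L)
    (hq : ContinuousOn q (Icc 0 L)) (hg : IntervalIntegrable g volume 0 L) :
    IntervalIntegrable (fun x => derivWithin ψ (Icc 0 L) x * q x + g x * ψ x) volume 0 L :=
  ((hψ.intervalIntegrable_derivWithin hL.le).mul_continuousOn
    (hq.mono (uIcc_of_le hL.le).subset)).add
    (hg.mul_continuousOn (hψ.continuousOn.mono (uIcc_of_le hL.le).subset))

lemma integral_derivWithin_cutoff_mul_add (hL : 0 < L) (hε : 0 < ε) (hεL : ε ≤ L / 2)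
    (hψ : MemH1Icc L ψ) (hq : ContinuousOn q (Icc 0 L)) (hg : IntervalIntegrable g volume 0 L) :
    ∫ x in 0..L, (derivWithin (fun t => cutoff L ε t * ψ t) (Icc 0 L) x * q x
        + g x * (cutoff L ε x * ψ x))
      = ε⁻¹ * (∫ x in 0..ε, ψ x * q x) - ε⁻¹ * (∫ x in L - ε..L, ψ x * q x)
        + ∫ x in 0..L, cutoff L ε x * (derivWithin ψ (Icc 0 L) x * q x + g x * ψ x) := by
  have hχ := memH1Icc_cutoff hL hε hεL
  have hψq : ContinuousOn (fun x => ψ x * q x) (Icc 0 L) := hψ.continuousOn.mul hq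
  have hI := (uIcc_of_le hL.le).subset
  have hF := hψ.intervalIntegrable_derivWithin_mul_add hL hq hg
  rw [← integral_derivWithin_cutoff_mul hL hε hεL hψq, ← integral_add
    ((hχ.intervalIntegrable_derivWithin hL.le).mul_continuousOn (hψq.mono hI))
    (hF.continuousOn_mul ((continuous_cutoff L ε).continuousOn))]
  refine integral_congr_ae ?_
  rw [← ae_restrict_iff' measurableSet_uIoc]
  filter_upwards [hχ.derivWithin_mul_ae hL.le hψ] with x hx
  rw [hx]
  ring

theorem integral_mul_eq_of_forall_cutoff (hL : 0 < L)
    (hf : IntervalIntegrable (fun x => f x ^ 2) volume 0 L) (hg : IntervalIntegrable g volume 0 L)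
    (hq : ContinuousOn q (Icc 0 L)) (hψ : MemH1Icc L ψ)
    (hweak : ∀ ε ∈ Ioc 0 (L / 2),
      ∫ x in 0..L, (derivWithin (fun t => cutoff L ε t * ψ t) (Icc 0 L) x * q x
        + g x * (cutoff L ε x * ψ x)) = ∫ x in 0..L, f x * (cutoff L ε x * ψ x)) :
    ∫ x in 0..L, f x * ψ x
      = (∫ x in 0..L, (derivWithin ψ (Icc 0 L) x * q x + g x * ψ x)) + ψ 0 * q 0 - ψ L * q L := by
  obtain ⟨M, hM⟩ := isCompact_Icc.exists_bound_of_continuousOn hψ.continuousOn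
  have hψq : ContinuousOn (fun x => ψ x * q x) (Icc 0 L) := hψ.continuousOn.mul hq
  have hF := hψ.intervalIntegrable_derivWithin_mul_add hL hq hg
  have hlhs : Tendsto (fun ε => ∫ x in 0..L, f x * (cutoff L ε x * ψ x)) (𝓝[>] 0)
      (𝓝 (∫ x in 0..L, f x * ψ x)) := by
    have := tendsto_integral_cutoff_mul hL (F := fun x => f x * ψ x)
      (b := fun x => M * (1 + f x ^ 2)) ((intervalIntegrable_const.add hf).const_mul M) ?_
    · simpa only [mul_left_comm] using this
    filter_upwards [ae_mem_Ioo_notMem hL.le ∅] with x hx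
    rw [abs_mul]
    have hMx : |ψ x| ≤ M := hM x (Ioo_subset_Icc_self hx.1)
    nlinarith [abs_nonneg (f x), abs_nonneg (ψ x), sq_abs (f x), sq_nonneg (|f x| - 1)]
  have hrhs := ((tendsto_inv_mul_integral_zero hL hψq).sub
    (tendsto_inv_mul_integral_self hL hψq)).add (tendsto_integral_cutoff_mul hL hF.abs
      (.of_forall fun x => le_rfl))
  have heq : (fun ε => ∫ x in 0..L, f x * (cutoff L ε x * ψ x)) =ᶠ[𝓝[>] 0] fun ε =>
      ε⁻¹ * (∫ x in 0..ε, ψ x * q x) - ε⁻¹ * (∫ x in L - ε..L, ψ x * q x)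
        + ∫ x in 0..L, cutoff L ε x * (derivWithin ψ (Icc 0 L) x * q x + g x * ψ x) := by
    filter_upwards [Ioc_mem_nhdsGT (half_pos hL)] with ε hε
    rw [← hweak ε hε, integral_derivWithin_cutoff_mul_add hL hε.1 hε.2 hψ hq hg]
  have := tendsto_nhds_unique (hlhs.congr' heq) hrhs
  linarith

end WeakFormulation

namespace MGraph

variable {G : MGraph}

lemma MemH1.memH1Icc {y : GFun G} {yv : G.V → ℝ} (hy : G.MemH1 y yv) (e : G.E) :
    MemH1Icc (G.len e) (y e) :=
  ⟨hy.1 e, hy.2.1 e, hy.2.2.2.2.2 e⟩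

lemma memH1_of_memH1Icc {y : GFun G} {yv : G.V → ℝ} (hy : ∀ e, MemH1Icc (G.len e) (y e))
    (h₀ : ∀ e, y e 0 = yv (G.src e)) (hL : ∀ e, y e (G.len e) = yv (G.dst e)) :
    G.MemH1 y yv :=
  ⟨fun e => (hy e).continuousOn, fun e => (hy e).exists_finset_differentiableWithinAt, h₀, hL,
    fun e => ((hy e).continuousOn.pow 2).intervalIntegrable_of_Icc (G.len_pos e).le,
    fun e => (hy e).intervalIntegrable_derivWithin_sq⟩

lemma memH1D_single [DecidableEq G.E] (VD : Finset G.V) {e : G.E} {ψ : ℝ → ℝ}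
    (hψ : MemH1Icc (G.len e) ψ) (h₀ : ψ 0 = 0) (hL : ψ (G.len e) = 0) :
    G.MemH1D VD (Pi.single e ψ) 0 := by
  refine ⟨memH1_of_memH1Icc (fun e' => ?_) (fun e' => ?_) (fun e' => ?_), fun _ _ => rfl⟩ <;>
    rcases eq_or_ne e' e with rfl | he
  all_goals simp_all [Pi.single_eq_of_ne]
  exact memH1Icc_of_contDiff (G.len_pos e') contDiff_const

lemma bform_single [DecidableEq G.E] (c0 p : GFun G) (e : G.E) (ψ : ℝ → ℝ) :
    G.bform c0 (Pi.single e ψ) p = ∫ x in 0..G.len e,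
      (derivWithin ψ (Icc 0 (G.len e)) x * G.edgeDeriv p e x + c0 e x * ψ x * p e x) := by
  rw [bform, Fintype.sum_eq_single e (fun e' he => by simp [he, edgeDeriv])]
  simp [edgeDeriv]

lemma ip2_single [DecidableEq G.E] (y : GFun G) (e : G.E) (ψ : ℝ → ℝ) :
    G.ip2 y (Pi.single e ψ) = ∫ x in 0..G.len e, y e x * ψ x := by
  rw [ip2, Fintype.sum_eq_single e (fun e' he => by simp [he])]
  simp

lemma sum_mul_Kop (y : GFun G) (φv : G.V → ℝ) :
    ∑ v, φv v * G.Kop y v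
      = ∑ e, (φv (G.dst e) * G.edgeDeriv y e (G.len e) - φv (G.src e) * G.edgeDeriv y e 0) := by
  simp only [Kop, Finset.mul_sum]
  rw [Finset.sum_comm]
  simp [mul_sub, Finset.sum_sub_distrib]

variable {VD : Finset G.V} {c0 y p : GFun G}

theorem integral_mul_eq_of_adjoint (hc0 : ∀ e, IntervalIntegrable (c0 e) volume 0 (G.len e))
    (hy : G.MemL2 y) (hp : ∀ e, ContinuousOn (p e) (Icc 0 (G.len e)))
    (hp' : ∀ e, ContinuousOn (G.edgeDeriv p e) (Icc 0 (G.len e)))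
    (hadj : ∀ w wv, G.MemH1D VD w wv → G.bform c0 w p = G.ip2 y w)
    (e : G.E) {ψ : ℝ → ℝ} (hψ : MemH1Icc (G.len e) ψ) :
    ∫ x in 0..G.len e, y e x * ψ x
      = (∫ x in 0..G.len e,
          (derivWithin ψ (Icc 0 (G.len e)) x * G.edgeDeriv p e x + c0 e x * ψ x * p e x))
        + ψ 0 * G.edgeDeriv p e 0 - ψ (G.len e) * G.edgeDeriv p e (G.len e) := by
  classical
  have hL := G.len_pos e
  have hg := (hc0 e).mul_continuousOn ((hp e).mono (uIcc_of_le hL.le).subset)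
  have key := integral_mul_eq_of_forall_cutoff hL (hy e) hg (hp' e) hψ fun ε hε => by
    have hw := hadj _ _ (memH1D_single VD ((memH1Icc_cutoff hL hε.1 hε.2).mul hL.le hψ)
      (by simp [cutoff_zero hL.le hε.1]) (by simp [cutoff_self hL.le hε.1]))
    rw [bform_single, ip2_single] at hw
    simpa only [mul_right_comm (c0 e _)] using hw
  simpa only [mul_right_comm (c0 e _)] using key

theorem ip2_eq_bform_sub_sum_mul_Kop
    (hc0 : ∀ e, IntervalIntegrable (c0 e) volume 0 (G.len e))
    (hy : G.MemL2 y) (hp : ∀ e, ContinuousOn (p e) (Icc 0 (G.len e)))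
    (hp' : ∀ e, ContinuousOn (G.edgeDeriv p e) (Icc 0 (G.len e)))
    (hadj : ∀ w wv, G.MemH1D VD w wv → G.bform c0 w p = G.ip2 y w)
    {φ : GFun G} {φv : G.V → ℝ} (hφ : G.MemH1 φ φv) :
    G.ip2 y φ = G.bform c0 φ p - ∑ v, φv v * G.Kop p v := by
  rw [sum_mul_Kop, ip2, bform, ← Finset.sum_sub_distrib]
  refine Finset.sum_congr rfl fun e _ => ?_
  rw [integral_mul_eq_of_adjoint hc0 hy hp hp' hadj e (hφ.memH1Icc e), hφ.2.2.1 e, hφ.2.2.2.1 e]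
  simp only [edgeDeriv]
  ring

variable (G) in
noncomputable def coarseHat (v : G.V) : GFun G := fun e x =>
  (if G.src e = v then 1 - x / G.len e else 0) + (if G.dst e = v then x / G.len e else 0)

lemma memH1_coarseHat (v : G.V) : G.MemH1 (G.coarseHat v) (Pi.single v 1) := by
  refine memH1_of_memH1Icc (fun e => memH1Icc_of_contDiff (G.len_pos e) ?_) (fun e => ?_)
    (fun e => ?_)
  · unfold coarseHat; split_ifs <;> fun_prop
  · simp [coarseHat, Pi.single_apply]
  · simp [coarseHat, Pi.single_apply, (G.len_pos e).ne']

theorem Kop_eq_zero_of_notMem (hc0 : ∀ e, IntervalIntegrable (c0 e) volume 0 (G.len e))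
    (hy : G.MemL2 y) (hp : ∀ e, ContinuousOn (p e) (Icc 0 (G.len e)))
    (hp' : ∀ e, ContinuousOn (G.edgeDeriv p e) (Icc 0 (G.len e)))
    (hadj : ∀ w wv, G.MemH1D VD w wv → G.bform c0 w p = G.ip2 y w)
    {v : G.V} (hv : v ∉ VD) : G.Kop p v = 0 := by
  have hφ := G.memH1_coarseHat v
  have h := ip2_eq_bform_sub_sum_mul_Kop hc0 hy hp hp' hadj hφ
  rw [hadj _ _ ⟨hφ, fun u hu => Pi.single_eq_of_ne (ne_of_mem_of_not_mem hu hv) 1⟩] at h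
  simpa [Pi.single_apply] using sub_eq_self.1 h.symm

end MGraph

/-- Lemma 2.1: the adjoint of the harmonic extension operator `S` is `-K∘P`,
i.e. `(y, Sz)_{L²(Γ)} = -(K(Py))ᵀ z` for all `y ∈ L²(Γ)` and `z ∈ ℝ^{n_D}`. -/
theorem adjoint_of_harmonic_extension
    (G : MGraph) (VD : Finset G.V) (c0 : GFun G)
    (hc0meas : ∀ e, Measurable (c0 e))
    (hc0 : ∀ e, ∀ x ∈ Icc (0:ℝ) (G.len e), 0 ≤ c0 e x)
    (hc0b : ∃ C : ℝ, ∀ e, ∀ x ∈ Icc (0:ℝ) (G.len e), c0 e x ≤ C)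
    (y : GFun G) (hy : G.MemL2 y)
    (z : G.V → ℝ)
    -- `yz = S z` is the harmonic extension of the Dirichlet data `z`
    (yz : GFun G) (yzv : G.V → ℝ) (hyz : G.MemH1 yz yzv)
    (hyzD : ∀ v ∈ VD, yzv v = z v)
    (hharm : ∀ w wv, G.MemH1D VD w wv → G.bform c0 yz w = 0)
    -- `p = P y` solves the adjoint problem `a(v,p) = (y,v)` for all `v ∈ H¹_D(Γ)`;
    -- by elliptic regularity `p ∈ H²(Γ)`
    (p : GFun G) (pv : G.V → ℝ) (hp : G.MemH1D VD p pv) (hpreg : G.MemH2 p)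
    (hadj : ∀ w wv, G.MemH1D VD w wv → G.bform c0 w p = G.ip2 y w) :
    G.ip2 y yz = -∑ v ∈ VD, G.Kop p v * z v := by
  obtain ⟨C, hC⟩ := hc0b
  have hc0int : ∀ e, IntervalIntegrable (c0 e) volume 0 (G.len e) := fun e =>
    (intervalIntegrable_iff_integrableOn_Icc_of_le (G.len_pos e).le).2 <|
      Measure.integrableOn_of_bounded measure_Icc_lt_top.ne (hc0meas e).aestronglyMeasurable
        ((ae_restrict_iff' measurableSet_Icc).2 <| .of_forall fun x hx => by
          rw [Real.norm_eq_abs, abs_of_nonneg (hc0 e x hx)]; exact hC e x hx)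
  have hpc : ∀ e, ContinuousOn (p e) (Icc 0 (G.len e)) := fun e x hx =>
    (hpreg.1 e x hx).continuousWithinAt
  have hK : ∀ v ∉ VD, G.Kop p v = 0 := fun v =>
    MGraph.Kop_eq_zero_of_notMem hc0int hy hpc hpreg.2.1 hadj
  rw [MGraph.ip2_eq_bform_sub_sum_mul_Kop hc0int hy hpc hpreg.2.1 hadj hyz, hharm p pv hp,
    ← Finset.sum_subset VD.subset_univ fun v _ hv => by rw [hK v hv, mul_zero],
    Finset.sum_congr rfl fun v hv => by rw [hyzD v hv, mul_comm], zero_sub]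
end

section
/- (Lemma 3.2) There exists a constant c>0, independent of the mesh parameter h, such that the discrete harmonic extension satisfies the stability estimate ‖S_h u‖_{H¹(Γ)} ≤ c |u|₂ for every u ∈ ℝ^{n_D}. -/
open MeasureTheory Set

/-!
Let `S̃u = tildeExt VD u` be the edgewise affine function with the Dirichlet data at the
Dirichlet vertices and `0` at the Kirchhoff vertices. It lies in `V_h` for every mesh, so
`w = S_h u - S̃u ∈ V_{h,D}`, and Galerkin orthogonality `a(S_h u, w) = 0` together with
`a(S_h u, S_h u) ≥ 0` gives `a(w, w) ≤ a(S̃u, S̃u)`. Coercivity `α ‖w‖² ≤ a(w, w)` and the bound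
`a(v, v) ≤ M ‖v‖²` (for `c₀ ≤ M`, `1 ≤ M`) give `‖w‖²_{H¹} ≤ (M / α) ‖S̃u‖²_{H¹}`, while
`‖S̃u‖²_{H¹} ≤ K |u|₂²` with `K` depending only on the edge lengths, not on the mesh.
-/

open scoped Interval

section IntervalLemmas

theorem aestronglyMeasurable_derivWithin_Icc_s8 {F : Type*} [NormedAddCommGroup F]
    [NormedSpace ℝ F] [CompleteSpace F] (f : ℝ → F) (a b : ℝ) :
    AEStronglyMeasurable (derivWithin f (Icc a b)) (volume.restrict (Ioc a b)) := by
  rw [← restrict_Ioo_eq_restrict_Ioc]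
  refine (stronglyMeasurable_deriv f).aestronglyMeasurable.congr ?_
  filter_upwards [ae_restrict_mem measurableSet_Ioo] with x hx
  exact (derivWithin_of_mem_nhds (Icc_mem_nhds hx.1 hx.2)).symm

variable {μ : Measure ℝ} {a b : ℝ} {f g h : ℝ → ℝ}

theorem IntervalIntegrable.mul_of_sq
    (hf : IntervalIntegrable (fun x => f x ^ 2) μ a b)
    (hg : IntervalIntegrable (fun x => g x ^ 2) μ a b)
    (hfm : AEStronglyMeasurable f (μ.restrict (Ι a b)))
    (hgm : AEStronglyMeasurable g (μ.restrict (Ι a b))) :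
    IntervalIntegrable (fun x => f x * g x) μ a b :=
  (hf.add hg).mono_fun' (hfm.mul hgm) <| ae_of_all _ fun x => by
    simp only [Real.norm_eq_abs, abs_mul]
    nlinarith [sq_abs (f x), sq_abs (g x), sq_nonneg (|f x| - |g x|)]

theorem intervalIntegral.integral_sq_le_of_ae_eq_add (hab : a ≤ b)
    (hf : IntervalIntegrable (fun x => f x ^ 2) μ a b)
    (hg : IntervalIntegrable (fun x => g x ^ 2) μ a b)
    (hh : IntervalIntegrable (fun x => h x ^ 2) μ a b)
    (hfgh : f =ᵐ[μ.restrict (Ι a b)] g + h) :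
    ∫ x in a..b, f x ^ 2 ∂μ ≤ 2 * ∫ x in a..b, g x ^ 2 ∂μ + 2 * ∫ x in a..b, h x ^ 2 ∂μ := by
  have hsq : (fun x => f x ^ 2) =ᵐ[μ.restrict (Ι a b)] fun x => (g x + h x) ^ 2 :=
    hfgh.mono fun x hx => by simp only [hx, Pi.add_apply]
  have hg2 := hg.const_mul 2
  have hh2 := hh.const_mul 2
  calc ∫ x in a..b, f x ^ 2 ∂μ = ∫ x in a..b, (g x + h x) ^ 2 ∂μ :=
        intervalIntegral.integral_congr_ae_restrict hsq
    _ ≤ ∫ x in a..b, (2 * g x ^ 2 + 2 * h x ^ 2) ∂μ :=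
        intervalIntegral.integral_mono_on hab (hf.congr_ae hsq) (hg2.add hh2) fun x _ => by
          nlinarith [sq_nonneg (g x - h x)]
    _ = _ := by
        rw [intervalIntegral.integral_add hg2 hh2, intervalIntegral.integral_const_mul,
          intervalIntegral.integral_const_mul]

-- `a + (b - a) * x / L` is `AffineMap.lineMap a b (x / L)`, the affine interpolant on `[0, L]`.
theorem hasDerivAt_lineMap_div (a b L x : ℝ) :
    HasDerivAt (fun x => a + (b - a) * x / L) ((b - a) / L) x := by
  simpa using (((hasDerivAt_id x).const_mul (b - a)).div_const L).const_add a

theorem sq_lineMap_div_le {a b L x : ℝ} (hL : 0 < L) (hx : x ∈ Icc 0 L) :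
    (a + (b - a) * x / L) ^ 2 ≤ a ^ 2 + b ^ 2 := by
  have ht0 : 0 ≤ x / L := div_nonneg hx.1 hL.le
  have ht1 : x / L ≤ 1 := (div_le_one hL).mpr hx.2
  have hconv : a + (b - a) * x / L = (1 - x / L) * a + x / L * b := by ring
  rw [hconv]
  nlinarith [mul_nonneg ht0 (sub_nonneg.2 ht1), sq_nonneg (a - b), sq_nonneg a, sq_nonneg b,
    mul_nonneg (mul_nonneg ht0 (sub_nonneg.2 ht1)) (sq_nonneg (a - b))]

theorem integral_sq_lineMap_div_add_sq_slope_le {a b L : ℝ} (hL : 0 < L) :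
    (∫ x in (0 : ℝ)..L, (a + (b - a) * x / L) ^ 2) + ∫ _ in (0 : ℝ)..L, ((b - a) / L) ^ 2
      ≤ (L + 2 / L) * (a ^ 2 + b ^ 2) := by
  have hval : ∫ x in (0 : ℝ)..L, (a + (b - a) * x / L) ^ 2 ≤ L * (a ^ 2 + b ^ 2) := by
    calc ∫ x in (0 : ℝ)..L, (a + (b - a) * x / L) ^ 2 ≤ ∫ _ in (0 : ℝ)..L, (a ^ 2 + b ^ 2) :=
          intervalIntegral.integral_mono_on hL.le (Continuous.intervalIntegrable (by fun_prop) _ _)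
            intervalIntegrable_const
            fun x hx => sq_lineMap_div_le hL hx
      _ = L * (a ^ 2 + b ^ 2) := by
          rw [intervalIntegral.integral_const, smul_eq_mul, sub_zero]
  have hslope : ∫ _ in (0 : ℝ)..L, ((b - a) / L) ^ 2 ≤ 2 / L * (a ^ 2 + b ^ 2) := by
    have hconst : L * ((b - a) / L) ^ 2 = (b - a) ^ 2 / L := by field_simp
    rw [intervalIntegral.integral_const, smul_eq_mul, sub_zero, hconst, div_mul_eq_mul_div]
    gcongr
    nlinarith [sq_nonneg (a + b)]
  linarith [add_mul L (2 / L) (a ^ 2 + b ^ 2)]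

theorem IntervalIntegrable.of_measurable_of_abs_le {f : ℝ → ℝ} {C : ℝ} (hab : a ≤ b)
    (hf : Measurable f) (hC : ∀ x ∈ Icc a b, |f x| ≤ C) : IntervalIntegrable f volume a b :=
  (intervalIntegrable_iff_integrableOn_Icc_of_le hab).2 <|
    Measure.integrableOn_of_bounded measure_Icc_lt_top.ne hf.aestronglyMeasurable <|
      (ae_restrict_iff' measurableSet_Icc).2 <| ae_of_all _ hC

end IntervalLemmas

namespace MGraph

variable {G : MGraph} {c0 y z w : GFun G} {yv zv wv : G.V → ℝ}

theorem aestronglyMeasurable_edgeDeriv (y : GFun G) (e : G.E) :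
    AEStronglyMeasurable (G.edgeDeriv y e) (volume.restrict (Ι 0 (G.len e))) := by
  rw [uIoc_of_le (G.len_pos e).le]
  exact aestronglyMeasurable_derivWithin_Icc_s8 _ _ _

namespace MemH1

theorem continuousOn (hy : G.MemH1 y yv) (e : G.E) : ContinuousOn (y e) [[0, G.len e]] := by
  rw [uIcc_of_le (G.len_pos e).le]
  exact hy.1 e

theorem intervalIntegrable_sq (hy : G.MemH1 y yv) (e : G.E) :
    IntervalIntegrable (fun x => y e x ^ 2) volume 0 (G.len e) :=
  hy.2.2.2.2.1 e

theorem intervalIntegrable_edgeDeriv_sq (hy : G.MemH1 y yv) (e : G.E) :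
    IntervalIntegrable (fun x => G.edgeDeriv y e x ^ 2) volume 0 (G.len e) :=
  hy.2.2.2.2.2 e

theorem intervalIntegrable_edgeDeriv_mul (hy : G.MemH1 y yv) (hz : G.MemH1 z zv) (e : G.E) :
    IntervalIntegrable (fun x => G.edgeDeriv y e x * G.edgeDeriv z e x) volume 0 (G.len e) :=
  (hy.intervalIntegrable_edgeDeriv_sq e).mul_of_sq (hz.intervalIntegrable_edgeDeriv_sq e)
    (aestronglyMeasurable_edgeDeriv y e) (aestronglyMeasurable_edgeDeriv z e)

theorem edgeDeriv_sub_ae (hy : G.MemH1 y yv) (hz : G.MemH1 z zv) (e : G.E) :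
    G.edgeDeriv (y - z) e =ᵐ[volume.restrict (Ι 0 (G.len e))]
      G.edgeDeriv y e - G.edgeDeriv z e := by
  obtain ⟨s, hs⟩ := hy.2.1 e
  obtain ⟨t, ht⟩ := hz.2.1 e
  have hst : ∀ᵐ x ∂volume, x ∉ ((s ∪ t : Finset ℝ) : Set ℝ) :=
    (s ∪ t).countable_toSet.ae_notMem volume
  filter_upwards [ae_restrict_of_ae hst, ae_restrict_mem measurableSet_uIoc] with x hxst hx
  rw [uIoc_of_le (G.len_pos e).le] at hx
  simp only [Finset.coe_union, mem_union, not_or, Finset.mem_coe] at hxst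
  exact derivWithin_sub (hs x (Ioc_subset_Icc_self hx) hxst.1)
    (ht x (Ioc_subset_Icc_self hx) hxst.2)

theorem sub (hy : G.MemH1 y yv) (hz : G.MemH1 z zv) : G.MemH1 (y - z) (yv - zv) := by
  refine ⟨fun e => (hy.1 e).sub (hz.1 e), fun e => ?_, fun e => ?_, fun e => ?_,
    fun e => ?_, fun e => ?_⟩
  · obtain ⟨s, hs⟩ := hy.2.1 e
    obtain ⟨t, ht⟩ := hz.2.1 e
    refine ⟨s ∪ t, fun x hx hxst => ?_⟩
    simp only [Finset.mem_union, not_or] at hxst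
    exact (hs x hx hxst.1).sub (ht x hx hxst.2)
  · simp only [Pi.sub_apply, hy.2.2.1 e, hz.2.2.1 e]
  · simp only [Pi.sub_apply, hy.2.2.2.1 e, hz.2.2.2.1 e]
  · exact (((hy.continuousOn e).sub (hz.continuousOn e)).pow 2).intervalIntegrable
  · have hexp := ((hy.intervalIntegrable_edgeDeriv_sq e).sub
      ((hy.intervalIntegrable_edgeDeriv_mul hz e).const_mul 2)).add
      (hz.intervalIntegrable_edgeDeriv_sq e)
    refine hexp.congr_ae ?_
    filter_upwards [hy.edgeDeriv_sub_ae hz e] with x hx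
    simp only [hx, Pi.sub_apply]
    ring

end MemH1

theorem MemH1.h1normSq_le_of_sub (hy : G.MemH1 y yv) (hz : G.MemH1 z zv) :
    G.h1normSq y ≤ 2 * G.h1normSq (y - z) + 2 * G.h1normSq z := by
  have hyz := hy.sub hz
  have hval : ∀ e, ∫ x in (0 : ℝ)..G.len e, y e x ^ 2 ≤
      2 * (∫ x in (0 : ℝ)..G.len e, (y - z) e x ^ 2) + 2 * ∫ x in (0 : ℝ)..G.len e, z e x ^ 2 :=
    fun e => intervalIntegral.integral_sq_le_of_ae_eq_add (G.len_pos e).le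
      (hy.intervalIntegrable_sq e) (hyz.intervalIntegrable_sq e) (hz.intervalIntegrable_sq e)
      (ae_of_all _ fun x => by simp)
  have hder : ∀ e, ∫ x in (0 : ℝ)..G.len e, G.edgeDeriv y e x ^ 2 ≤
      2 * (∫ x in (0 : ℝ)..G.len e, G.edgeDeriv (y - z) e x ^ 2) +
        2 * ∫ x in (0 : ℝ)..G.len e, G.edgeDeriv z e x ^ 2 := by
    refine fun e => intervalIntegral.integral_sq_le_of_ae_eq_add (G.len_pos e).le
      (hy.intervalIntegrable_edgeDeriv_sq e) (hyz.intervalIntegrable_edgeDeriv_sq e)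
      (hz.intervalIntegrable_edgeDeriv_sq e) ?_
    filter_upwards [hy.edgeDeriv_sub_ae hz e] with x hx
    simp [hx]
  have hval_sum := Finset.sum_le_sum fun e (_ : e ∈ Finset.univ) => hval e
  have hder_sum := Finset.sum_le_sum fun e (_ : e ∈ Finset.univ) => hder e
  simp only [Finset.sum_add_distrib, ← Finset.mul_sum] at hval_sum hder_sum
  simp only [h1normSq, l2normSq]
  linarith

section BilinearForm

variable (hc0 : ∀ e, IntervalIntegrable (c0 e) volume 0 (G.len e))
include hc0

theorem MemH1.intervalIntegrable_bform (hy : G.MemH1 y yv) (hz : G.MemH1 z zv) (e : G.E) :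
    IntervalIntegrable
      (fun x => G.edgeDeriv y e x * G.edgeDeriv z e x + c0 e x * y e x * z e x)
      volume 0 (G.len e) :=
  (hy.intervalIntegrable_edgeDeriv_mul hz e).add
    (((hc0 e).mul_continuousOn (hy.continuousOn e)).mul_continuousOn (hz.continuousOn e))

theorem bform_sub_left (hy : G.MemH1 y yv) (hz : G.MemH1 z zv) (hw : G.MemH1 w wv) :
    G.bform c0 (y - z) w = G.bform c0 y w - G.bform c0 z w := by
  rw [bform, bform, bform, ← Finset.sum_sub_distrib]
  refine Finset.sum_congr rfl fun e _ => ?_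
  rw [← intervalIntegral.integral_sub (hy.intervalIntegrable_bform hc0 hw e)
    (hz.intervalIntegrable_bform hc0 hw e)]
  refine intervalIntegral.integral_congr_ae_restrict ?_
  filter_upwards [hy.edgeDeriv_sub_ae hz e] with x hx
  simp only [hx, Pi.sub_apply]
  ring

omit hc0 in
theorem bform_comm (c0 y z : GFun G) : G.bform c0 y z = G.bform c0 z y := by
  simp only [bform, mul_comm (G.edgeDeriv y _ _), mul_right_comm (c0 _ _) (y _ _)]

theorem bform_sub_self (hy : G.MemH1 y yv) (hz : G.MemH1 z zv) :
    G.bform c0 (y - z) (y - z) = G.bform c0 y y - 2 * G.bform c0 y z + G.bform c0 z z := by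
  have hyz := hy.sub hz
  rw [bform_sub_left hc0 hy hz hyz, bform_comm c0 y, bform_comm c0 z,
    bform_sub_left hc0 hy hz hy, bform_sub_left hc0 hy hz hz, bform_comm c0 z y]
  ring

omit hc0 in
theorem bform_self_nonneg (hc0_nonneg : ∀ e, ∀ x ∈ Icc 0 (G.len e), 0 ≤ c0 e x) (y : GFun G) :
    0 ≤ G.bform c0 y y :=
  Finset.sum_nonneg fun e _ =>
    intervalIntegral.integral_nonneg (G.len_pos e).le fun x hx =>
      add_nonneg (mul_self_nonneg _) (mul_assoc (c0 e x) _ _ ▸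
        mul_nonneg (hc0_nonneg e x hx) (mul_self_nonneg _))

theorem bform_self_le_of_bform_eq_zero (hc0_nonneg : ∀ e, ∀ x ∈ Icc 0 (G.len e), 0 ≤ c0 e x)
    (hy : G.MemH1 y yv) (hz : G.MemH1 z zv) (horth : G.bform c0 y z = 0) :
    G.bform c0 z z ≤ G.bform c0 (y - z) (y - z) := by
  rw [bform_sub_self hc0 hy hz, horth]
  linarith [bform_self_nonneg hc0_nonneg y]

theorem bform_self_le_mul_h1normSq {M : ℝ} (hM : ∀ e, ∀ x ∈ Icc 0 (G.len e), c0 e x ≤ M)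
    (hM1 : 1 ≤ M) (hy : G.MemH1 y yv) : G.bform c0 y y ≤ M * G.h1normSq y := by
  have hedge : ∀ e, ∫ x in (0 : ℝ)..G.len e,
      (G.edgeDeriv y e x * G.edgeDeriv y e x + c0 e x * y e x * y e x) ≤
      M * ((∫ x in (0 : ℝ)..G.len e, y e x ^ 2) +
        ∫ x in (0 : ℝ)..G.len e, G.edgeDeriv y e x ^ 2) := by
    intro e
    have hsq := hy.intervalIntegrable_sq e
    have hd := hy.intervalIntegrable_edgeDeriv_sq e
    calc _ ≤ ∫ x in (0 : ℝ)..G.len e, M * (y e x ^ 2 + G.edgeDeriv y e x ^ 2) :=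
          intervalIntegral.integral_mono_on (G.len_pos e).le (hy.intervalIntegrable_bform hc0 hy e)
            ((hsq.add hd).const_mul M) fun x hx => by
              nlinarith [mul_nonneg (sub_nonneg.2 (hM e x hx)) (sq_nonneg (y e x)),
                mul_nonneg (sub_nonneg.2 hM1) (sq_nonneg (G.edgeDeriv y e x))]
      _ = _ := by rw [intervalIntegral.integral_const_mul, intervalIntegral.integral_add hsq hd]
  calc G.bform c0 y y ≤ ∑ e, M * ((∫ x in (0 : ℝ)..G.len e, y e x ^ 2) +
        ∫ x in (0 : ℝ)..G.len e, G.edgeDeriv y e x ^ 2) := Finset.sum_le_sum fun e _ => hedge e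
    _ = M * G.h1normSq y := by rw [h1normSq, l2normSq, ← Finset.sum_add_distrib, Finset.mul_sum]

theorem h1normSq_le_of_bform_sub_eq_zero
    (hc0_nonneg : ∀ e, ∀ x ∈ Icc 0 (G.len e), 0 ≤ c0 e x) {M α : ℝ} (hα : 0 < α)
    (hM : ∀ e, ∀ x ∈ Icc 0 (G.len e), c0 e x ≤ M) (hM1 : 1 ≤ M)
    (hy : G.MemH1 y yv) (hz : G.MemH1 z zv)
    (hcoer : α * G.h1normSq (y - z) ≤ G.bform c0 (y - z) (y - z))
    (horth : G.bform c0 y (y - z) = 0) :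
    G.h1normSq y ≤ 2 * (1 + M / α) * G.h1normSq z := by
  have henergy := bform_self_le_of_bform_eq_zero hc0 hc0_nonneg hy (hy.sub hz) horth
  rw [sub_sub_cancel] at henergy
  have hsub : G.h1normSq (y - z) ≤ M / α * G.h1normSq z := by
    rw [div_mul_eq_mul_div, le_div_iff₀ hα]
    linarith [bform_self_le_mul_h1normSq hc0 hM hM1 hz]
  linarith [hy.h1normSq_le_of_sub hz]

end BilinearForm

theorem PiecewiseAffine.sub {n : G.E → ℕ} (hy : G.PiecewiseAffine n y)
    (hz : G.PiecewiseAffine n z) : G.PiecewiseAffine n (y - z) := by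
  intro e k hk
  obtain ⟨p, q, hpq⟩ := hy e k hk
  obtain ⟨p', q', hpq'⟩ := hz e k hk
  exact ⟨p - p', q - q', fun x hx => by simp only [Pi.sub_apply, hpq x hx, hpq' x hx]; ring⟩

theorem MemVh.sub {n : G.E → ℕ} (hy : G.MemVh n y yv) (hz : G.MemVh n z zv) :
    G.MemVh n (y - z) (yv - zv) :=
  ⟨hy.1.sub hz.1, hy.2.sub hz.2⟩

variable (G) in
def extendByZero (VD : Finset G.V) (u : G.V → ℝ) (v : G.V) : ℝ :=
  if v ∈ VD then u v else 0

section TildeExt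

variable {VD : Finset G.V} {u : G.V → ℝ}

theorem sq_extendByZero_le (v : G.V) : G.extendByZero VD u v ^ 2 ≤ ∑ w ∈ VD, u w ^ 2 := by
  by_cases hv : v ∈ VD
  · simpa [extendByZero, hv] using Finset.single_le_sum (fun w _ => sq_nonneg (u w)) hv
  · simpa [extendByZero, hv] using Finset.sum_nonneg fun w _ => sq_nonneg (u w)

theorem tildeExt_apply (e : G.E) : G.tildeExt VD u e = fun x =>
    G.extendByZero VD u (G.src e) +
      (G.extendByZero VD u (G.dst e) - G.extendByZero VD u (G.src e)) * x / G.len e :=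
  rfl

theorem edgeDeriv_tildeExt {e : G.E} {x : ℝ} (hx : x ∈ Icc 0 (G.len e)) :
    G.edgeDeriv (G.tildeExt VD u) e x =
      (G.extendByZero VD u (G.dst e) - G.extendByZero VD u (G.src e)) / G.len e := by
  rw [edgeDeriv, tildeExt_apply]
  exact (hasDerivAt_lineMap_div _ _ _ x).hasDerivWithinAt.derivWithin
    (uniqueDiffOn_Icc (G.len_pos e) x hx)

variable (VD u) in
theorem memVh_tildeExt (n : G.E → ℕ) : G.MemVh n (G.tildeExt VD u) (G.extendByZero VD u) := by
  have hcont : ∀ e, Continuous (G.tildeExt VD u e) := fun e => by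
    rw [tildeExt_apply]; fun_prop
  refine ⟨⟨fun e => (hcont e).continuousOn, fun e => ⟨∅, fun x _ _ => ?_⟩, fun e => ?_,
    fun e => ?_, fun e => ((hcont e).pow 2).intervalIntegrable _ _, fun e => ?_⟩, ?_⟩
  · rw [tildeExt_apply]
    exact (hasDerivAt_lineMap_div _ _ _ x).differentiableAt.differentiableWithinAt
  · simp [tildeExt_apply]
  · rw [tildeExt_apply]
    simp [(G.len_pos e).ne']
  · refine (intervalIntegrable_const (c := ((G.extendByZero VD u (G.dst e) -
      G.extendByZero VD u (G.src e)) / G.len e) ^ 2)).congr fun x hx => ?_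
    rw [uIoc_of_le (G.len_pos e).le] at hx
    simp only [edgeDeriv_tildeExt (Ioc_subset_Icc_self hx)]
  · intro e k _
    exact ⟨(G.extendByZero VD u (G.dst e) - G.extendByZero VD u (G.src e)) / G.len e,
      G.extendByZero VD u (G.src e), fun x _ => by rw [tildeExt_apply]; ring⟩

variable (VD u) in
theorem h1normSq_tildeExt_le :
    G.h1normSq (G.tildeExt VD u) ≤
      (∑ e, 2 * (G.len e + 2 / G.len e)) * ∑ v ∈ VD, u v ^ 2 := by
  have hedge : ∀ e, (∫ x in (0 : ℝ)..G.len e, G.tildeExt VD u e x ^ 2) +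
      ∫ x in (0 : ℝ)..G.len e, G.edgeDeriv (G.tildeExt VD u) e x ^ 2 ≤
      2 * (G.len e + 2 / G.len e) * ∑ v ∈ VD, u v ^ 2 := by
    intro e
    have hL := G.len_pos e
    have hderiv : ∫ x in (0 : ℝ)..G.len e, G.edgeDeriv (G.tildeExt VD u) e x ^ 2 =
        ∫ _ in (0 : ℝ)..G.len e,
          ((G.extendByZero VD u (G.dst e) - G.extendByZero VD u (G.src e)) / G.len e) ^ 2 :=
      intervalIntegral.integral_congr fun x hx => by
        rw [uIcc_of_le hL.le] at hx
        simp only [edgeDeriv_tildeExt hx]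
    rw [hderiv, tildeExt_apply]
    refine (integral_sq_lineMap_div_add_sq_slope_le hL).trans ?_
    have hsrc := sq_extendByZero_le (VD := VD) (u := u) (G.src e)
    have hdst := sq_extendByZero_le (VD := VD) (u := u) (G.dst e)
    have : 0 ≤ G.len e + 2 / G.len e := by positivity
    nlinarith
  rw [h1normSq, l2normSq, ← Finset.sum_add_distrib, Finset.sum_mul]
  exact Finset.sum_le_sum fun e _ => hedge e

end TildeExt

end MGraph

/-- Lemma 3.2: stability of the discrete harmonic extension,
`‖S_h u‖_{H¹(Γ)} ≤ c |u|₂` with `c` independent of the mesh parameter `h`. -/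
theorem discrete_harmonic_extension_stability
    (G : MGraph) (VD : Finset G.V) (c0 : GFun G)
    (hc0meas : ∀ e, Measurable (c0 e))
    (hc0 : ∀ e, ∀ x ∈ Icc (0:ℝ) (G.len e), 0 ≤ c0 e x)
    (hc0b : ∃ C : ℝ, ∀ e, ∀ x ∈ Icc (0:ℝ) (G.len e), c0 e x ≤ C)
    -- `a` is assumed coercive on `H¹_D(Γ)`
    (hcoer : ∃ α > 0, ∀ y yv, G.MemH1D VD y yv → α * G.h1normSq y ≤ G.bform c0 y y) :
    ∃ c > 0, ∀ (n : G.E → ℕ), (∀ e, 0 < n e) →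
      ∀ (u : G.V → ℝ) (Shu : GFun G) (Shuv : G.V → ℝ),
        G.MemVh n Shu Shuv → (∀ v ∈ VD, Shuv v = u v) →
        (∀ w wv, G.MemVhD VD n w wv → G.bform c0 Shu w = 0) →
        Real.sqrt (G.h1normSq Shu) ≤ c * G.dnorm VD u := by
  obtain ⟨C, hC⟩ := hc0b
  obtain ⟨α, hα, hcoer⟩ := hcoer
  have hc0int : ∀ e, IntervalIntegrable (c0 e) volume 0 (G.len e) := fun e =>
    .of_measurable_of_abs_le (G.len_pos e).le (hc0meas e) fun x hx => by
      rw [abs_of_nonneg (hc0 e x hx)]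
      exact hC e x hx
  set M := max C 1
  set K := ∑ e, 2 * (G.len e + 2 / G.len e)
  have hMK : 0 ≤ 2 * (1 + M / α) * K :=
    mul_nonneg (by positivity) (Finset.sum_nonneg fun e _ => by have := G.len_pos e; positivity)
  refine ⟨√(2 * (1 + M / α) * K + 1), by positivity, fun n _ u S Sv hS hSv horth => ?_⟩
  have hty := MGraph.memVh_tildeExt VD u n
  have hw : G.MemVhD VD n (S - G.tildeExt VD u) (Sv - G.extendByZero VD u) :=
    ⟨hS.sub hty, fun v hv => by simp [MGraph.extendByZero, hv, hSv v hv]⟩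
  have hS_le := MGraph.h1normSq_le_of_bform_sub_eq_zero hc0int hc0 hα
    (fun e x hx => (hC e x hx).trans (le_max_left C 1)) (le_max_right C 1) hS.1 hty.1
    (hcoer _ _ ⟨hw.1.1, hw.2⟩) (horth _ _ hw)
  have hty_le := mul_le_mul_of_nonneg_left (MGraph.h1normSq_tildeExt_le VD u)
    (by positivity : 0 ≤ 2 * (1 + M / α))
  have hsum : 0 ≤ ∑ v ∈ VD, u v ^ 2 := Finset.sum_nonneg fun v _ => sq_nonneg (u v)
  calc √(G.h1normSq S) ≤ √((2 * (1 + M / α) * K + 1) * ∑ v ∈ VD, u v ^ 2) :=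
        Real.sqrt_le_sqrt (by nlinarith)
    _ = √(2 * (1 + M / α) * K + 1) * G.dnorm VD u := by
        rw [Real.sqrt_mul (by positivity), MGraph.dnorm]
end
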